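/- (Spectral representation of the wave vector on the hypercube, n = 2.) Let d ≥ 2 be an integer, X = (ℤ/2ℤ)^d, and let w_0, …, w_d be nonnegative reals with Σ w_i = 1; define κ_j = C(d,j), ρ_j = Σ_{i=0}^d (w_i/κ_i) K_i(j), μ_j^± = ρ_j ± √−1·√(1−ρ_j²), the coin matrix C_{y,y'} = 2√((w_{|y|}/κ_{|y|})(w_{|y'|}/κ_{|y'|})) − δ_{y,y'}, and the wave vector by ψ_{y,x}(0) = δ_{x,0}√(w_{|y|}/κ_{|y|}) and ψ_{y,x}(t+1) = Σ_{y'∈X} C_{y,y'} ψ_{y',x⊕y}(t). Then for all t ∈ ℕ and x, y ∈ X: ψ_{y,x}(t) = (1/2^d)√(w_{|y|}/κ_{|y|})·{ 1 + (1/2)·Σ_{j: |ρ_j|<1} [ (μ_j^+)^t/(1−ρ_j μ_j^+) + (μ_j^−)^t/(1−ρ_j μ_j^−) ]·K_j(|x|) − (1/2)·Σ_{j: |ρ_j|<1} [ (μ_j^+)^{t+1}/(1−ρ_j μ_j^+) + (μ_j^−)^{t+1}/(1−ρ_j μ_j^−) ]·K_j(|x⊕y|) + Σ_{j>0: ρ_j=1}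 [(1−t)K_j(|x|) + t·K_j(|x⊕y|)] + Σ_{j>0: ρ_j=−1} (−1)^t·[(1−t)K_j(|x|) − t·K_j(|x⊕y|)] }, where the sums over j run over {0, 1, …, d} (respectively {1, …, d} in the last two sums). -/

import Mathlib

open scoped Classical

/-- The Krawtchouk polynomial value for `n = 2`:
`K_i(j) = Σ_{l=0}^{i} (-1)^l C(j,l) C(d-j, i-l)`. -/
noncomputable def kraw2 (d i j : ℕ) : ℝ :=
  ∑ l ∈ Finset.range (i + 1),
    (-1 : ℝ) ^ l * (j.choose l) * ((d - j).choose (i - l))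

/-- The coin matrix on the hypercube:
`C_{y,y'} = 2√((w_{|y|}/κ_{|y|})(w_{|y'|}/κ_{|y'|})) - δ_{y,y'}` with `κ_j = C(d,j)`. -/
noncomputable def coin2 (d : ℕ) (w : ℕ → ℝ) (y y' : Fin d → ZMod 2) : ℝ :=
  2 * Real.sqrt ((w (hammingNorm y) / (d.choose (hammingNorm y) : ℝ)) *
      (w (hammingNorm y') / (d.choose (hammingNorm y') : ℝ))) - if y = y' then 1 else 0

/-!
The characters `χ_k(x) = (-1)^(k ⬝ᵥ x)` of `(ℤ/2)^d` diagonalise convolution with every radial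
weight, and summing them over the Hamming sphere `|k| = j` gives `K_j(|x|)`. Hence averaging
`K_j(|x ⊕ y|)` against the weights `w_{|y|}/κ_{|y|}` multiplies it by `ρ_j`, and one step of the
walk acts on the coefficients of `K_j(|x|)` and `K_j(|x ⊕ y|)` by the three-term recurrence of
the Chebyshev polynomials of the second kind:
`ψ_{y,x}(t) = 2^{-d} √(w_{|y|}/κ_{|y|}) Σ_j (U_{t-1}(ρ_j) K_j(|x ⊕ y|) - U_{t-2}(ρ_j) K_j(|x|))`.
The spectral form follows by evaluating `U` at `ρ_j = ±1` and, for `|ρ_j| < 1`, from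
`U_{n-2}(ρ) = -(μ₊ⁿ/(1 - ρμ₊) + μ₋ⁿ/(1 - ρμ₋))/2`, as `μ±` are the roots of `μ² - 2ρμ + 1`.
-/

open Finset Polynomial Polynomial.Chebyshev

section Characters

variable {ι : Type*} [Fintype ι]

noncomputable def hypercubeChar (k x : ι → ZMod 2) : ℝ := (-1) ^ (k ⬝ᵥ x).val

lemma neg_one_pow_val_add (a b : ZMod 2) :
    (-1 : ℝ) ^ (a + b).val = (-1) ^ a.val * (-1) ^ b.val := by
  rw [ZMod.val_add, ← neg_one_pow_eq_pow_mod_two, pow_add]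

lemma hypercubeChar_add_right (k x y : ι → ZMod 2) :
    hypercubeChar k (x + y) = hypercubeChar k x * hypercubeChar k y := by
  rw [hypercubeChar, dotProduct_add, neg_one_pow_val_add]; rfl

lemma hypercubeChar_comm (k x : ι → ZMod 2) : hypercubeChar k x = hypercubeChar x k := by
  rw [hypercubeChar, dotProduct_comm]; rfl

lemma hypercubeChar_zero_right (k : ι → ZMod 2) : hypercubeChar k 0 = 1 := by
  simp [hypercubeChar]

lemma abs_hypercubeChar (k x : ι → ZMod 2) : |hypercubeChar k x| = 1 := by
  simp [hypercubeChar]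

lemma sum_hypercubeChar [DecidableEq ι] (x : ι → ZMod 2) :
    ∑ k, hypercubeChar k x = if x = 0 then 2 ^ Fintype.card ι else 0 := by
  split_ifs with hx
  · simp [hx, hypercubeChar_zero_right, Fintype.card_pi]
  obtain ⟨i, hi⟩ : ∃ i, x i ≠ 0 := by simpa [funext_iff] using hx
  have hflip : ∀ k, hypercubeChar (k + Pi.single i 1) x = -hypercubeChar k x := by
    intro k
    have hxi : x i = 1 := (by decide : ∀ v : ZMod 2, v ≠ 0 → v = 1) _ hi
    rw [hypercubeChar_comm, hypercubeChar_add_right, hypercubeChar_comm x]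
    simp [hypercubeChar, hxi, ZMod.val_one]
  have hshift := Equiv.sum_comp (Equiv.addRight (Pi.single i 1 : ι → ZMod 2)) (hypercubeChar · x)
  simp only [Equiv.coe_addRight, hflip, sum_neg_distrib] at hshift
  linarith

end Characters

section Krawtchouk

variable {ι : Type*} [Fintype ι] [DecidableEq ι]

lemma kraw2_zero_left (d j : ℕ) : kraw2 d 0 j = 1 := by simp [kraw2]

lemma kraw2_zero_right (d i : ℕ) : kraw2 d i 0 = d.choose i := by
  simp [kraw2, sum_range_succ']

lemma card_filter_card_inter_eq (A : Finset ι) {j l : ℕ} (hl : l ≤ j) :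
    #{K : Finset ι | #K = j ∧ #(K ∩ A) = l} =
      (#A).choose l * (Fintype.card ι - #A).choose (j - l) := by
  rw [← card_powersetCard l A, ← card_compl, ← card_powersetCard (j - l) Aᶜ, ← card_product]
  refine card_nbij' (fun K => (K ∩ A, K \ A)) (fun P => P.1 ∪ P.2) ?_ ?_ ?_ ?_ <;>
    simp only [Set.MapsTo, Set.LeftInvOn, mem_coe, mem_filter, mem_univ, true_and, mem_product,
      mem_powersetCard, subset_compl_iff_disjoint_right, and_imp, Prod.forall]
  · intro K hKj hKA
    refine ⟨⟨inter_subset_right, hKA⟩, disjoint_sdiff_self_left, ?_⟩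
    have := card_inter_add_card_sdiff K A
    omega
  · intro P Q hPA hP hQA hQ
    have hPQ : Disjoint P Q := disjoint_of_subset_left hPA hQA.symm
    rw [card_union_of_disjoint hPQ, union_inter_distrib_right, inter_eq_left.mpr hPA,
      disjoint_iff_inter_eq_empty.mp hQA, union_empty]
    omega
  · intro K _ _
    rw [union_comm, sdiff_union_inter]
  · intro P Q hPA _ hQA _
    simp only [union_inter_distrib_right, inter_eq_left.mpr hPA,
      disjoint_iff_inter_eq_empty.mp hQA, union_empty, union_sdiff_distrib,
      sdiff_eq_empty_iff_subset.mpr hPA, empty_union, sdiff_eq_self_of_disjoint hQA]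

lemma sum_neg_one_pow_card_inter_eq_kraw2 (A : Finset ι) (j : ℕ) :
    ∑ K : Finset ι with #K = j, (-1 : ℝ) ^ #(K ∩ A) = kraw2 (Fintype.card ι) j #A := by
  rw [kraw2, ← sum_fiberwise_of_maps_to (g := fun K => #(K ∩ A)) (t := range (j + 1))]
  · refine sum_congr rfl fun l hl => ?_
    have hlj : l ≤ j := Nat.lt_succ_iff.mp (mem_range.mp hl)
    rw [sum_congr rfl fun K hK => by rw [(mem_filter.mp hK).2], sum_const, filter_filter,
      card_filter_card_inter_eq A hlj, nsmul_eq_mul]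
    push_cast
    ring
  · intro K hK
    rw [mem_range, Nat.lt_succ_iff, ← (mem_filter.mp hK).2]
    exact card_le_card inter_subset_left

def supportEquiv : (ι → ZMod 2) ≃ Finset ι where
  toFun k := {i | k i ≠ 0}
  invFun K i := if i ∈ K then 1 else 0
  left_inv k := funext fun i => by
    rcases (by decide : ∀ v : ZMod 2, v = 0 ∨ v = 1) (k i) with h | h <;> simp [h]
  right_inv K := by ext i; by_cases h : i ∈ K <;> simp [h]

lemma card_supportEquiv (k : ι → ZMod 2) : #(supportEquiv k) = hammingNorm k := rfl

lemma hypercubeChar_eq_neg_one_pow (k x : ι → ZMod 2) :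
    hypercubeChar k x = (-1) ^ #(supportEquiv k ∩ supportEquiv x) := by
  have hmul : ∀ a b : ZMod 2, a * b = if a ≠ 0 ∧ b ≠ 0 then 1 else 0 := by decide
  have hdot : k ⬝ᵥ x = (#(supportEquiv k ∩ supportEquiv x) : ZMod 2) := by
    simp only [dotProduct, hmul, sum_boole, supportEquiv, Equiv.coe_fn_mk, filter_and]
  rw [hypercubeChar, hdot, ZMod.val_natCast, ← neg_one_pow_eq_pow_mod_two]

lemma sum_hypercubeChar_eq_kraw2 (j : ℕ) (x : ι → ZMod 2) :
    ∑ k with hammingNorm k = j, hypercubeChar k x =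
      kraw2 (Fintype.card ι) j (hammingNorm x) := by
  rw [← card_supportEquiv x, ← sum_neg_one_pow_card_inter_eq_kraw2]
  exact sum_equiv supportEquiv (by simp [card_supportEquiv])
    (fun k _ => hypercubeChar_eq_neg_one_pow k x)

lemma sum_radial_mul_hypercubeChar (f : ℕ → ℝ) (k : ι → ZMod 2) :
    ∑ y, f (hammingNorm y) * hypercubeChar y k =
      ∑ i ∈ range (Fintype.card ι + 1), f i * kraw2 (Fintype.card ι) i (hammingNorm k) := by
  rw [← sum_fiberwise_of_maps_to (g := hammingNorm) (t := range (Fintype.card ι + 1))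
    fun y _ => mem_range.mpr (Nat.lt_succ_of_le hammingNorm_le_card_fintype)]
  refine sum_congr rfl fun i _ => ?_
  rw [← sum_hypercubeChar_eq_kraw2, mul_sum]
  exact sum_congr rfl fun y hy => by rw [(mem_filter.mp hy).2]

lemma sum_radial_mul_kraw2 (f : ℕ → ℝ) (j : ℕ) (u : ι → ZMod 2) :
    ∑ y, f (hammingNorm y) * kraw2 (Fintype.card ι) j (hammingNorm (u + y)) =
      (∑ i ∈ range (Fintype.card ι + 1), f i * kraw2 (Fintype.card ι) i j) *
        kraw2 (Fintype.card ι) j (hammingNorm u) := by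
  simp only [← sum_hypercubeChar_eq_kraw2, hypercubeChar_add_right, mul_sum, sum_mul]
  rw [sum_comm]
  refine sum_congr rfl fun k hk => ?_
  rw [← (mem_filter.mp hk).2, ← sum_mul, ← sum_radial_mul_hypercubeChar, sum_mul]
  exact sum_congr rfl fun y _ => by rw [hypercubeChar_comm y k]; ring

lemma sum_kraw2_hammingNorm (x : ι → ZMod 2) :
    ∑ j ∈ range (Fintype.card ι + 1), kraw2 (Fintype.card ι) j (hammingNorm x) =
      if x = 0 then 2 ^ Fintype.card ι else 0 := by
  rw [← sum_hypercubeChar, ← sum_fiberwise_of_maps_to (g := hammingNorm)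
    (t := range (Fintype.card ι + 1))
    fun y _ => mem_range.mpr (Nat.lt_succ_of_le hammingNorm_le_card_fintype)]
  exact sum_congr rfl fun j _ => (sum_hypercubeChar_eq_kraw2 j x).symm

lemma abs_sum_mul_kraw2_le (f : ℕ → ℝ) (hf : ∀ i ≤ Fintype.card ι, 0 ≤ f i) {j : ℕ}
    (hj : j ≤ Fintype.card ι) :
    |∑ i ∈ range (Fintype.card ι + 1), f i * kraw2 (Fintype.card ι) i j| ≤
      ∑ i ∈ range (Fintype.card ι + 1), f i * kraw2 (Fintype.card ι) i 0 := by
  obtain ⟨K, -, hK⟩ := exists_subset_card_eq (s := (univ : Finset ι)) (n := j) (by simpa)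
  have hk : hammingNorm (supportEquiv.symm K) = j := by
    rw [← card_supportEquiv, Equiv.apply_symm_apply, hK]
  rw [← hk, ← hammingNorm_zero (β := fun _ : ι => ZMod 2), ← sum_radial_mul_hypercubeChar,
    ← sum_radial_mul_hypercubeChar]
  refine (abs_sum_le_sum_abs _ _).trans (le_of_eq (sum_congr rfl fun y _ => ?_))
  rw [abs_mul, abs_hypercubeChar, hypercubeChar_zero_right,
    abs_of_nonneg (hf _ hammingNorm_le_card_fintype)]

end Krawtchouk

lemma U_eval_sub_two_eq {p m r : ℂ} (hsum : p + m = 2 * r) (hprod : p * m = 1) (hr : r ^ 2 ≠ 1)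
    (n : ℕ) : (U ℂ ((n : ℤ) - 2)).eval r = -(p ^ n / (1 - r * p) + m ^ n / (1 - r * m)) / 2 := by
  have hden : (1 - r * p) * (1 - r * m) = 1 - r ^ 2 := by
    linear_combination (-r) * hsum + r ^ 2 * hprod
  have hden' : (1 - r * p) * (1 - r * m) ≠ 0 := hden ▸ sub_ne_zero.mpr (Ne.symm hr)
  have hp : 1 - r * p ≠ 0 := left_ne_zero_of_mul hden'
  have hm : 1 - r * m ≠ 0 := right_ne_zero_of_mul hden'
  induction n using Nat.twoStepInduction with
  | zero =>
    simp only [Nat.cast_zero, zero_sub, U_neg_two, eval_neg, eval_one, pow_zero]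
    field_simp
    linear_combination (-2) * hden - r * hsum
  | one =>
    have hnum : p * (1 - r * m) + (1 - r * p) * m = 0 := by
      linear_combination hsum - 2 * r * hprod
    simp only [Nat.cast_one, show (1 : ℤ) - 2 = -1 by norm_num, U_neg_one, eval_zero, pow_one]
    rw [div_add_div _ _ hp hm, hnum]
    simp
  | more n ih₀ ih₁ =>
    rw [show ((n + 2 : ℕ) : ℤ) - 2 = n by push_cast; ring, U_eq, eval_sub, eval_mul, eval_mul,
      eval_X, eval_ofNat, show (n : ℤ) - 1 = ((n + 1 : ℕ) : ℤ) - 2 by push_cast; ring, ih₁, ih₀]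
    have hp2 : p ^ (n + 2) = 2 * r * p ^ (n + 1) - p ^ n := by
      linear_combination p ^ n * (p * hsum - hprod)
    have hm2 : m ^ (n + 2) = 2 * r * m ^ (n + 1) - m ^ n := by
      linear_combination m ^ n * (m * hsum - hprod)
    rw [hp2, hm2]
    field_simp
    ring

lemma U_eval_sub_two_eq_of_abs_lt {r : ℝ} (hr : |r| < 1) (n : ℕ) :
    (U ℂ ((n : ℤ) - 2)).eval (r : ℂ) =
      -((r + Complex.I * √(1 - r ^ 2)) ^ n / (1 - r * (r + Complex.I * √(1 - r ^ 2))) +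
        (r - Complex.I * √(1 - r ^ 2)) ^ n / (1 - r * (r - Complex.I * √(1 - r ^ 2)))) / 2 := by
  have hr2 : r ^ 2 < 1 := by nlinarith [abs_lt.mp hr]
  have hs : ((√(1 - r ^ 2) : ℝ) : ℂ) ^ 2 = 1 - r ^ 2 := by
    rw [← Complex.ofReal_pow, Real.sq_sqrt (by linarith)]; push_cast; ring
  refine U_eval_sub_two_eq (by ring) ?_ ?_ n
  · linear_combination hs - ((√(1 - r ^ 2) : ℝ) : ℂ) ^ 2 * Complex.I_sq
  · exact_mod_cast hr2.ne

/-- `U ℂ` is indexed by `ℤ`; at `t = 0` the coefficients are `U_{-1} = 0` and `U_{-2} = -1`. -/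
noncomputable def chebyshevWave (d : ℕ) (ρ : ℕ → ℝ) (t : ℕ) (x z : Fin d → ZMod 2) : ℂ :=
  ∑ j ∈ range (d + 1), ((U ℂ ((t : ℤ) - 1)).eval (ρ j : ℂ) * kraw2 d j (hammingNorm z) -
    (U ℂ ((t : ℤ) - 2)).eval (ρ j : ℂ) * kraw2 d j (hammingNorm x))

lemma chebyshevWave_zero {d : ℕ} (ρ : ℕ → ℝ) (x z : Fin d → ZMod 2) :
    chebyshevWave d ρ 0 x z = if x = 0 then 2 ^ d else 0 := by
  have h := sum_kraw2_hammingNorm x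
  rw [Fintype.card_fin] at h
  simp only [chebyshevWave, Nat.cast_zero, zero_sub, U_neg_one, U_neg_two, eval_zero, eval_neg,
    eval_one, zero_mul, neg_one_mul, zero_sub, neg_neg]
  rw [← Complex.ofReal_sum, h]
  split_ifs <;> simp

lemma two_mul_sum_radial_mul_chebyshevWave_sub {d : ℕ} (f ρ : ℕ → ℝ)
    (hρ : ∀ j, ρ j = ∑ i ∈ range (d + 1), f i * kraw2 d i j) (hρ0 : ρ 0 = 1) (t : ℕ)
    (u v : Fin d → ZMod 2) :
    2 * ∑ y, (f (hammingNorm y) : ℂ) * chebyshevWave d ρ t u (u + y) -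
      chebyshevWave d ρ t u v = chebyshevWave d ρ (t + 1) v u := by
  have heig (j : ℕ) (u : Fin d → ZMod 2) : ∑ y, (f (hammingNorm y) : ℂ) *
      kraw2 d j (hammingNorm (u + y)) = ρ j * kraw2 d j (hammingNorm u) := by
    have h := sum_radial_mul_kraw2 f j u
    rw [Fintype.card_fin, ← hρ] at h
    exact_mod_cast h
  have hmass : ∑ y : Fin d → ZMod 2, (f (hammingNorm y) : ℂ) = 1 := by
    simpa [kraw2_zero_left, hρ0] using heig 0 0
  have hmean : ∑ y, (f (hammingNorm y) : ℂ) * chebyshevWave d ρ t u (u + y) =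
      ∑ j ∈ range (d + 1), ((U ℂ ((t : ℤ) - 1)).eval (ρ j : ℂ) * (ρ j * kraw2 d j (hammingNorm u)) -
        (U ℂ ((t : ℤ) - 2)).eval (ρ j : ℂ) * kraw2 d j (hammingNorm u)) := by
    simp only [chebyshevWave, mul_sum]
    rw [sum_comm]
    refine sum_congr rfl fun j _ => ?_
    simp only [mul_sub, sum_sub_distrib, mul_left_comm _ ((U ℂ _).eval _), ← mul_sum, heig,
      ← sum_mul, hmass, one_mul]
  rw [hmean, chebyshevWave, chebyshevWave, mul_sum, ← sum_sub_distrib]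
  refine sum_congr rfl fun j _ => ?_
  rw [show ((t + 1 : ℕ) : ℤ) - 1 = t by push_cast; ring,
    show ((t + 1 : ℕ) : ℤ) - 2 = t - 1 by push_cast; ring, U_eq ℂ (t : ℤ)]
  simp only [eval_sub, eval_mul, eval_ofNat, eval_X]
  ring

noncomputable def coinWeight (d : ℕ) (w : ℕ → ℝ) (i : ℕ) : ℝ := w i / d.choose i

lemma coinWeight_hammingNorm_nonneg {d : ℕ} {w : ℕ → ℝ} (hw : ∀ i ∈ range (d + 1), 0 ≤ w i)
    (y : Fin d → ZMod 2) : 0 ≤ coinWeight d w (hammingNorm y) := by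
  have hy : hammingNorm y ≤ d := by simpa using hammingNorm_le_card_fintype (x := y)
  exact div_nonneg (hw _ (mem_range.mpr (Nat.lt_succ_of_le hy))) (Nat.cast_nonneg _)

lemma coin2_mul_sqrt {d : ℕ} {w : ℕ → ℝ} (hw : ∀ i ∈ range (d + 1), 0 ≤ w i)
    (y y' : Fin d → ZMod 2) :
    coin2 d w y y' * √(coinWeight d w (hammingNorm y')) =
      2 * √(coinWeight d w (hammingNorm y)) * coinWeight d w (hammingNorm y') -
        if y = y' then √(coinWeight d w (hammingNorm y)) else 0 := by
  have h := coinWeight_hammingNorm_nonneg hw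
  rw [coin2, sub_mul, ← coinWeight, ← coinWeight, Real.sqrt_mul (h y), mul_assoc, mul_assoc,
    Real.mul_self_sqrt (h y')]
  split_ifs with hyy
  · subst hyy; ring
  · ring

lemma wave_eq_chebyshevWave {d : ℕ} (w : ℕ → ℝ) (hw : ∀ i ∈ range (d + 1), 0 ≤ w i)
    (ρ : ℕ → ℝ) (hρ : ∀ j, ρ j = ∑ i ∈ range (d + 1), coinWeight d w i * kraw2 d i j)
    (hρ0 : ρ 0 = 1) (ψ : ℕ → (Fin d → ZMod 2) → (Fin d → ZMod 2) → ℂ)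
    (hψ0 : ∀ y x, ψ 0 y x = (if x = 0 then 1 else 0) * (√(coinWeight d w (hammingNorm y)) : ℂ))
    (hψ : ∀ t y x, ψ (t + 1) y x = ∑ y', (coin2 d w y y' : ℂ) * ψ t y' (x + y))
    (t : ℕ) (y x : Fin d → ZMod 2) :
    ψ t y x = 1 / (2 : ℂ) ^ d * (√(coinWeight d w (hammingNorm y)) : ℂ) *
      chebyshevWave d ρ t x (x + y) := by
  induction t generalizing y x with
  | zero =>
    rw [hψ0, chebyshevWave_zero]
    split_ifs
    · field_simp
    · simp
  | succ t ih =>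
    set s : (Fin d → ZMod 2) → ℂ := fun y => √(coinWeight d w (hammingNorm y))
    have hcoin (y' : Fin d → ZMod 2) : (coin2 d w y y' : ℂ) * s y' =
        2 * s y * coinWeight d w (hammingNorm y') - if y = y' then s y else 0 := by
      simp only [s]
      rw [← Complex.ofReal_mul, coin2_mul_sqrt hw]
      split_ifs <;> push_cast <;> ring
    have hxyy : x + y + y = x := funext fun i => (by decide : ∀ a b : ZMod 2, a + b + b = a) _ _
    rw [hψ, ← two_mul_sum_radial_mul_chebyshevWave_sub _ ρ hρ hρ0 t (x + y) x]
    simp only [ih]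
    calc ∑ y', (coin2 d w y y' : ℂ) * (1 / 2 ^ d * s y' * chebyshevWave d ρ t (x + y) (x + y + y'))
        = 1 / 2 ^ d * ∑ y', (2 * s y * (coinWeight d w (hammingNorm y') *
            chebyshevWave d ρ t (x + y) (x + y + y')) -
              if y = y' then s y * chebyshevWave d ρ t (x + y) (x + y + y') else 0) := by
          rw [mul_sum]
          refine sum_congr rfl fun y' _ => ?_
          rw [show ∀ a b c : ℂ, a * (1 / 2 ^ d * b * c) = 1 / 2 ^ d * (a * b * c) by
            intros; ring, hcoin]
          split_ifs <;> ring
      _ = _ := by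
          rw [sum_sub_distrib, ← mul_sum, sum_ite_eq, if_pos (mem_univ _), hxyy]
          ring

lemma sum_range_succ_eq_add_sum_filter {M : Type*} [AddCommMonoid M] {d : ℕ} (ρ : ℕ → ℝ)
    (hρ0 : ρ 0 = 1) (hρ : ∀ j ≤ d, |ρ j| ≤ 1) (f : ℕ → M) :
    ∑ j ∈ range (d + 1), f j =
      f 0 + ∑ j ∈ range (d + 1) with |ρ j| < 1, f j + ∑ j ∈ Icc 1 d with ρ j = 1, f j +
        ∑ j ∈ Icc 1 d with ρ j = -1, f j := by
  have hsplit (g : ℕ → M) : ∑ j ∈ range (d + 1), g j = g 0 + ∑ j ∈ Icc 1 d, g j := by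
    rw [range_eq_Ico, sum_eq_sum_Ico_succ_bot d.succ_pos, zero_add, Nat.succ_eq_add_one,
      Ico_add_one_right_eq_Icc]
  have htri : ∀ j ∈ Icc 1 d, f j = ((if |ρ j| < 1 then f j else 0) +
      if ρ j = 1 then f j else 0) + if ρ j = -1 then f j else 0 := by
    intro j hj
    rcases (hρ j (mem_Icc.mp hj).2).lt_or_eq with h | h
    · have : ρ j ≠ 1 ∧ ρ j ≠ -1 := by constructor <;> rintro h' <;> simp [h'] at h
      simp [h, this]
    · rcases abs_eq zero_le_one |>.mp h with h' | h' <;> norm_num [h']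
  rw [sum_filter, sum_filter, sum_filter, hsplit f, hsplit, sum_congr rfl htri,
    sum_add_distrib, sum_add_distrib]
  simp [hρ0, add_assoc]

lemma chebyshevWave_eq_spectral {d : ℕ} (ρ : ℕ → ℝ) (hρ0 : ρ 0 = 1)
    (hρ : ∀ j ≤ d, |ρ j| ≤ 1) (μp μm : ℕ → ℂ)
    (hμp : ∀ j, μp j = ρ j + Complex.I * √(1 - ρ j ^ 2))
    (hμm : ∀ j, μm j = ρ j - Complex.I * √(1 - ρ j ^ 2))
    (t : ℕ) (x z : Fin d → ZMod 2) :
    chebyshevWave d ρ t x z =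
      1 +
        1 / 2 * ∑ j ∈ range (d + 1) with |ρ j| < 1,
          (μp j ^ t / (1 - ρ j * μp j) + μm j ^ t / (1 - ρ j * μm j)) *
            kraw2 d j (hammingNorm x) -
        1 / 2 * ∑ j ∈ range (d + 1) with |ρ j| < 1,
          (μp j ^ (t + 1) / (1 - ρ j * μp j) + μm j ^ (t + 1) / (1 - ρ j * μm j)) *
            kraw2 d j (hammingNorm z) +
        ∑ j ∈ Icc 1 d with ρ j = 1,
          ((1 - (t : ℂ)) * kraw2 d j (hammingNorm x) + t * kraw2 d j (hammingNorm z)) +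
        ∑ j ∈ Icc 1 d with ρ j = -1,
          (-1 : ℂ) ^ t * ((1 - t) * kraw2 d j (hammingNorm x) - t * kraw2 d j (hammingNorm z)) := by
  have hU_one (n : ℤ) : (U ℂ n).eval ((1 : ℝ) : ℂ) = n + 1 := by
    rw [Complex.ofReal_one, U_eval_one]
  have hU_neg_one (n : ℤ) : (U ℂ n).eval ((-1 : ℝ) : ℂ) = n.negOnePow * (n + 1) := by
    rw [Complex.ofReal_neg, Complex.ofReal_one, U_eval_neg_one]
  rw [chebyshevWave, sum_range_succ_eq_add_sum_filter ρ hρ0 hρ, mul_sum, mul_sum, add_sub_assoc,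
    ← sum_sub_distrib]
  refine congrArg₂ (· + ·) (congrArg₂ (· + ·) (congrArg₂ (· + ·) ?_ ?_) ?_) ?_
  · rw [hρ0, hU_one, hU_one, kraw2_zero_left, kraw2_zero_left]
    push_cast; ring
  · refine sum_congr rfl fun j hj => ?_
    have hj := (mem_filter.mp hj).2
    rw [hμp, hμm, show ((t : ℕ) : ℤ) - 1 = ((t + 1 : ℕ) : ℤ) - 2 by push_cast; ring,
      U_eval_sub_two_eq_of_abs_lt hj, U_eval_sub_two_eq_of_abs_lt hj]
    ring
  · refine sum_congr rfl fun j hj => ?_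
    rw [(mem_filter.mp hj).2, hU_one, hU_one]
    push_cast; ring
  · refine sum_congr rfl fun j hj => ?_
    rw [(mem_filter.mp hj).2, hU_neg_one, hU_neg_one, Int.negOnePow_sub, Int.negOnePow_sub,
      Int.negOnePow_one, Int.negOnePow_even 2 even_two, mul_one, mul_neg]
    push_cast [Int.cast_negOnePow_natCast]
    ring

lemma sum_coinWeight_mul_kraw2_zero {d : ℕ} {w : ℕ → ℝ}
    (hsum : ∑ i ∈ range (d + 1), w i = 1) :
    ∑ i ∈ range (d + 1), coinWeight d w i * kraw2 d i 0 = 1 := by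
  rw [← hsum]
  refine sum_congr rfl fun i hi => ?_
  have : (d.choose i : ℝ) ≠ 0 := by
    exact_mod_cast (Nat.choose_pos (Nat.lt_succ_iff.mp (mem_range.mp hi))).ne'
  rw [coinWeight, kraw2_zero_right, div_mul_cancel₀ _ this]

theorem spectral_representation_hypercube_general (d : ℕ)
    (w : ℕ → ℝ) (hw : ∀ i ∈ Finset.range (d + 1), 0 ≤ w i)
    (hsum : ∑ i ∈ Finset.range (d + 1), w i = 1)
    (ρ : ℕ → ℝ)
    (hρ : ∀ j, ρ j = ∑ i ∈ Finset.range (d + 1),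
      w i / (d.choose i : ℝ) * kraw2 d i j)
    (μp μm : ℕ → ℂ)
    (hμp : ∀ j, μp j = (ρ j : ℂ) + Complex.I * (Real.sqrt (1 - ρ j ^ 2) : ℝ))
    (hμm : ∀ j, μm j = (ρ j : ℂ) - Complex.I * (Real.sqrt (1 - ρ j ^ 2) : ℝ))
    (ψ : ℕ → (Fin d → ZMod 2) → (Fin d → ZMod 2) → ℂ)
    (hψ0 : ∀ (y x : Fin d → ZMod 2), ψ 0 y x =
      (if x = 0 then 1 else 0) *
        (Real.sqrt (w (hammingNorm y) / (d.choose (hammingNorm y) : ℝ)) : ℝ))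
    (hψ : ∀ (t : ℕ) (y x : Fin d → ZMod 2), ψ (t + 1) y x =
      ∑ y', ((coin2 d w y y' : ℝ) : ℂ) * ψ t y' (x + y)) :
    ∀ (t : ℕ) (y x : Fin d → ZMod 2), ψ t y x =
      (1 / (2 : ℂ) ^ d) *
        (Real.sqrt (w (hammingNorm y) / (d.choose (hammingNorm y) : ℝ)) : ℝ) *
        (1 +
          (1 / 2) * ∑ j ∈ (Finset.range (d + 1)).filter (fun j => |ρ j| < 1),
            ((μp j) ^ t / (1 - (ρ j : ℂ) * μp j) +
              (μm j) ^ t / (1 - (ρ j : ℂ) * μm j)) * (kraw2 d j (hammingNorm x) : ℝ) -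
          (1 / 2) * ∑ j ∈ (Finset.range (d + 1)).filter (fun j => |ρ j| < 1),
            ((μp j) ^ (t + 1) / (1 - (ρ j : ℂ) * μp j) +
              (μm j) ^ (t + 1) / (1 - (ρ j : ℂ) * μm j)) *
              (kraw2 d j (hammingNorm (x + y)) : ℝ) +
          ∑ j ∈ (Finset.Icc 1 d).filter (fun j => ρ j = 1),
            ((1 - (t : ℂ)) * (kraw2 d j (hammingNorm x) : ℝ) +
              (t : ℂ) * (kraw2 d j (hammingNorm (x + y)) : ℝ)) +
          ∑ j ∈ (Finset.Icc 1 d).filter (fun j => ρ j = -1),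
            (-1 : ℂ) ^ t * ((1 - (t : ℂ)) * (kraw2 d j (hammingNorm x) : ℝ) -
              (t : ℂ) * (kraw2 d j (hammingNorm (x + y)) : ℝ))) := by
  have hρ0 : ρ 0 = 1 := (hρ 0).trans (sum_coinWeight_mul_kraw2_zero hsum)
  have hρ_le (j : ℕ) (hj : j ≤ d) : |ρ j| ≤ 1 := by
    have h := abs_sum_mul_kraw2_le (ι := Fin d) (coinWeight d w)
      (fun i hi => div_nonneg (hw i (by simpa [Nat.lt_succ_iff] using hi)) (Nat.cast_nonneg _))
      (by simpa using hj)
    rw [Fintype.card_fin, sum_coinWeight_mul_kraw2_zero hsum] at h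
    rwa [hρ]
  intro t y x
  rw [wave_eq_chebyshevWave w hw ρ hρ hρ0 ψ hψ0 hψ,
    chebyshevWave_eq_spectral ρ hρ0 hρ_le μp μm hμp hμm]
  rfl

/-- Spectral representation of the wave vector on the hypercube,
Corollary 5.2: for the quantum walk on `H(d,2)` with coin built from weights
`w`, eigenvalues `ρ_j = Σ_i (w_i/κ_i)K_i(j)` and `μ_j^± = ρ_j ± √-1·√(1-ρ_j²)`,
the wave vector `ψ_{y,x}(t)` admits the stated spectral representation. -/
theorem spectral_representation_hypercube (d : ℕ) (hd : 2 ≤ d)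
    (w : ℕ → ℝ) (hw : ∀ i ∈ Finset.range (d + 1), 0 ≤ w i)
    (hsum : ∑ i ∈ Finset.range (d + 1), w i = 1)
    (ρ : ℕ → ℝ)
    (hρ : ∀ j, ρ j = ∑ i ∈ Finset.range (d + 1),
      w i / (d.choose i : ℝ) * kraw2 d i j)
    (μp μm : ℕ → ℂ)
    (hμp : ∀ j, μp j = (ρ j : ℂ) + Complex.I * (Real.sqrt (1 - ρ j ^ 2) : ℝ))
    (hμm : ∀ j, μm j = (ρ j : ℂ) - Complex.I * (Real.sqrt (1 - ρ j ^ 2) : ℝ))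
    (ψ : ℕ → (Fin d → ZMod 2) → (Fin d → ZMod 2) → ℂ)
    (hψ0 : ∀ (y x : Fin d → ZMod 2), ψ 0 y x =
      (if x = 0 then 1 else 0) *
        (Real.sqrt (w (hammingNorm y) / (d.choose (hammingNorm y) : ℝ)) : ℝ))
    (hψ : ∀ (t : ℕ) (y x : Fin d → ZMod 2), ψ (t + 1) y x =
      ∑ y', ((coin2 d w y y' : ℝ) : ℂ) * ψ t y' (x + y)) :
    ∀ (t : ℕ) (y x : Fin d → ZMod 2), ψ t y x =
      (1 / (2 : ℂ) ^ d) *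
        (Real.sqrt (w (hammingNorm y) / (d.choose (hammingNorm y) : ℝ)) : ℝ) *
        (1 +
          (1 / 2) * ∑ j ∈ (Finset.range (d + 1)).filter (fun j => |ρ j| < 1),
            ((μp j) ^ t / (1 - (ρ j : ℂ) * μp j) +
              (μm j) ^ t / (1 - (ρ j : ℂ) * μm j)) * (kraw2 d j (hammingNorm x) : ℝ) -
          (1 / 2) * ∑ j ∈ (Finset.range (d + 1)).filter (fun j => |ρ j| < 1),
            ((μp j) ^ (t + 1) / (1 - (ρ j : ℂ) * μp j) +
              (μm j) ^ (t + 1) / (1 - (ρ j : ℂ) * μm j)) *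
              (kraw2 d j (hammingNorm (x + y)) : ℝ) +
          ∑ j ∈ (Finset.Icc 1 d).filter (fun j => ρ j = 1),
            ((1 - (t : ℂ)) * (kraw2 d j (hammingNorm x) : ℝ) +
              (t : ℂ) * (kraw2 d j (hammingNorm (x + y)) : ℝ)) +
          ∑ j ∈ (Finset.Icc 1 d).filter (fun j => ρ j = -1),
            (-1 : ℂ) ^ t * ((1 - (t : ℂ)) * (kraw2 d j (hammingNorm x) : ℝ) -
              (t : ℂ) * (kraw2 d j (hammingNorm (x + y)) : ℝ))) :=
  spectral_representation_hypercube_general d w hw hsum ρ hρ μp μm hμp hμm ψ hψ0 hψ
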